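/- arXiv:2506.11622 — 4 statements merged into one kernel-verified Lean document; each statement's English description precedes it below -/
import Mathlib

section
/- L₂ operator bound for QMC hyperinterpolation: let Ω = [0,1)^d, let (q_h)_{h∈I} be a finite orthonormal family in L₂(Ω), and let x₀,…,x_{N−1} ∈ Ω and η ∈ (0,1) be such that |(1/N)Σ_{n} |p(x_n)|² − ∫_Ω |p|²| ≤ η∫_Ω |p|² for every p ∈ span{q_h : h ∈ I}. Define Q_I f = Σ_{h∈I} ((1/N)Σ_n f(x_n) conj(q_h(x_n))) q_h. Then for every bounded f, ‖Q_I f‖_{L₂} ≤ √(1+η)·‖f‖_∞. -/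
open Complex Finset MeasureTheory

def unitCube (d : ℕ) : Set (Fin d → ℝ) := Set.univ.pi fun _ => Set.Ico (0 : ℝ) 1

/-!
Write `c_h` for the coefficients of `Q_I f`. Once the products `q_h · conj q_h'` are known to be
integrable, orthonormality gives `‖Q_I f‖² = Σ_h |c_h|²`, and unfolding the coefficients turns this
into the discrete inner product `(1/N) Σ_n Q_I f(x_n) · conj f(x_n)`. By Cauchy–Schwarz its square
is at most the product of the discrete norms of `Q_I f` and `f`; the first is at most
`(1 + η) ‖Q_I f‖²` by the quadrature assumption applied to `Q_I f`, the second at most `C²`.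
Hence `‖Q_I f‖⁴ ≤ (1 + η) C² ‖Q_I f‖²`.
-/

open ComplexConjugate

section EmpiricalMean

variable {α R : Type*}

def empiricalMean [DivisionSemiring R] (N : ℕ) (x : ℕ → α) (g : α → R) : R :=
  (1 / (N : R)) * ∑ n ∈ range N, g (x n)

variable {N : ℕ} {x : ℕ → α}

theorem empiricalMean_add [DivisionSemiring R] (g g' : α → R) :
    empiricalMean N x (fun y => g y + g' y) = empiricalMean N x g + empiricalMean N x g' := by
  simp only [empiricalMean, sum_add_distrib, mul_add]

theorem empiricalMean_nonneg {g : α → ℝ} (h : ∀ n < N, 0 ≤ g (x n)) :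
    0 ≤ empiricalMean N x g :=
  mul_nonneg (by positivity) (sum_nonneg fun n hn => h n (mem_range.mp hn))

theorem empiricalMean_mono {g g' : α → ℝ} (h : ∀ n < N, g (x n) ≤ g' (x n)) :
    empiricalMean N x g ≤ empiricalMean N x g' :=
  mul_le_mul_of_nonneg_left (sum_le_sum fun n hn => h n (mem_range.mp hn)) (by positivity)

theorem empiricalMean_le_of_forall_le {g : α → ℝ} {c : ℝ} (hc : 0 ≤ c)
    (h : ∀ n < N, g (x n) ≤ c) : empiricalMean N x g ≤ c := by
  calc empiricalMean N x g ≤ (1 / (N : ℝ)) * ∑ _n ∈ range N, c :=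
        mul_le_mul_of_nonneg_left (sum_le_sum fun n hn => h n (mem_range.mp hn)) (by positivity)
    _ = (N / N : ℝ) * c := by rw [sum_const, card_range, nsmul_eq_mul]; ring
    _ ≤ c := mul_le_of_le_one_left hc (div_self_le_one _)

theorem conj_empiricalMean (g : α → ℂ) :
    conj (empiricalMean N x g) = empiricalMean N x (fun y => conj (g y)) := by
  simp [empiricalMean, map_sum]

theorem sq_norm_empiricalMean_mul_conj_le (u v : α → ℂ) :
    ‖empiricalMean N x (fun y => u y * conj (v y))‖ ^ 2 ≤
      empiricalMean N x (fun y => ‖u y‖ ^ 2) * empiricalMean N x (fun y => ‖v y‖ ^ 2) := by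
  have hnorm : ‖empiricalMean N x (fun y => u y * conj (v y))‖ ≤
      (1 / (N : ℝ)) * ∑ n ∈ range N, ‖u (x n)‖ * ‖v (x n)‖ := by
    simp only [empiricalMean, norm_mul, one_div, norm_inv, norm_natCast]
    refine mul_le_mul_of_nonneg_left ((norm_sum_le _ _).trans_eq ?_) (by positivity)
    simp
  calc _ ≤ ((1 / (N : ℝ)) * ∑ n ∈ range N, ‖u (x n)‖ * ‖v (x n)‖) ^ 2 :=
        pow_le_pow_left₀ (norm_nonneg _) hnorm 2
    _ ≤ (1 / (N : ℝ)) ^ 2 * ((∑ n ∈ range N, ‖u (x n)‖ ^ 2) * ∑ n ∈ range N, ‖v (x n)‖ ^ 2) := by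
        rw [mul_pow]; gcongr; exact sum_mul_sq_le_sq_mul_sq _ _ _
    _ = _ := by simp only [empiricalMean]; ring

end EmpiricalMean

section Integrability

variable {α : Type*} [MeasurableSpace α] {μ : Measure α}

theorem integrable_norm_add_sq_iff_norm_sub_sq {f g : α → ℂ}
    (hf : Integrable (fun y => ‖f y‖ ^ 2) μ) (hg : Integrable (fun y => ‖g y‖ ^ 2) μ) :
    Integrable (fun y => ‖f y + g y‖ ^ 2) μ ↔ Integrable (fun y => ‖f y - g y‖ ^ 2) μ := by
  have hpar : Integrable (fun y => 2 * (‖f y‖ ^ 2 + ‖g y‖ ^ 2)) μ := (hf.add hg).const_mul 2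
  have h := fun y => parallelogram_law_with_norm ℂ (f y) (g y)
  constructor <;> intro hint <;> convert hpar.sub hint using 2 with y <;>
    simp only [Pi.sub_apply] <;> linarith [h y]

theorem integrable_inner_of_forall_integrable_norm_add_smul_sq {𝕜 E : Type*} [RCLike 𝕜]
    [NormedAddCommGroup E] [InnerProductSpace 𝕜 E] {f g : α → E}
    (h : ∀ t : 𝕜, Integrable (fun y => ‖f y + t • g y‖ ^ 2) μ) :
    Integrable (fun y => inner 𝕜 (f y) (g y)) μ := by
  have hc : ∀ t : 𝕜, Integrable (fun y => (‖f y + t • g y‖ : 𝕜) ^ 2) μ := fun t => by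
    simpa using (h t).ofReal (𝕜 := 𝕜)
  simp only [inner_eq_sum_norm_sq_div_four]
  have hm := hc (-1)
  simp only [neg_smul, one_smul, ← sub_eq_add_neg] at hm
  have hmI := hc (-RCLike.I)
  simp only [neg_smul, ← sub_eq_add_neg] at hmI
  have h1 := hc 1
  simp only [one_smul] at h1
  exact ((h1.sub hm).add ((hmI.sub (hc RCLike.I)).mul_const _)).div_const _

end Integrability

section Hyperinterpolation

variable {α ι : Type*} {I : Finset ι} {q : ι → α → ℂ} {N : ℕ} {x : ℕ → α}

noncomputable def hyperCoeff (q : ι → α → ℂ) (N : ℕ) (x : ℕ → α) (f : α → ℂ) (h : ι) : ℂ :=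
  empiricalMean N x (fun z => f z * conj (q h z))

noncomputable def hyperinterpolation (I : Finset ι) (q : ι → α → ℂ) (N : ℕ) (x : ℕ → α)
    (f : α → ℂ) (y : α) : ℂ :=
  ∑ h ∈ I, hyperCoeff q N x f h * q h y

theorem Finset.sum_pi_single_mul [DecidableEq ι] {h : ι} (hh : h ∈ I) (t : ℂ) (y : α) :
    ∑ k ∈ I, (Pi.single h t : ι → ℂ) k * q k y = t * q h y := by
  simp [Pi.single_apply, ite_mul, hh]

theorem ofReal_sum_norm_sq_hyperCoeff (f : α → ℂ) :
    ((∑ h ∈ I, ‖hyperCoeff q N x f h‖ ^ 2 : ℝ) : ℂ) =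
      empiricalMean N x (fun y => hyperinterpolation I q N x f y * conj (f y)) := by
  have hconj : ∀ h, conj (hyperCoeff q N x f h) = empiricalMean N x (fun z => conj (f z) * q h z) :=
    fun h => by simp only [hyperCoeff, conj_empiricalMean, map_mul, conj_conj]
  push_cast
  simp only [← mul_conj', hconj]
  simp only [empiricalMean, hyperinterpolation, mul_sum, sum_mul]
  rw [sum_comm]
  exact sum_congr rfl fun _ _ => sum_congr rfl fun _ _ => by ring

variable [MeasurableSpace α] {μ : Measure α} {η : ℝ}

/- No measurability of `q` is assumed, so for `h ≠ h'` the product `q h * conj (q h')` may fail to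
be integrable (Bochner integral `0`); integrability is recovered from the quadrature assumption in
`IsRelaxedMZ.integrable_mul_conj`. -/
def IsOrthonormalFamily [DecidableEq ι] (μ : Measure α) (I : Finset ι) (q : ι → α → ℂ) : Prop :=
  ∀ h ∈ I, ∀ h' ∈ I, ∫ y, q h y * conj (q h' y) ∂μ = if h = h' then 1 else 0

def IsRelaxedMZ (μ : Measure α) (I : Finset ι) (q : ι → α → ℂ) (N : ℕ) (x : ℕ → α) (η : ℝ) :
    Prop :=
  ∀ a : ι → ℂ, |empiricalMean N x (fun y => ‖∑ h ∈ I, a h * q h y‖ ^ 2) -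
      ∫ y, ‖∑ h ∈ I, a h * q h y‖ ^ 2 ∂μ| ≤ η * ∫ y, ‖∑ h ∈ I, a h * q h y‖ ^ 2 ∂μ

theorem IsOrthonormalFamily.integral_ofReal_norm_sq [DecidableEq ι] (hq : IsOrthonormalFamily μ I q)
    {h : ι} (hh : h ∈ I) : ∫ y, ((‖q h y‖ ^ 2 : ℝ) : ℂ) ∂μ = 1 := by
  simpa [mul_conj'] using hq h hh h hh

theorem IsOrthonormalFamily.integrable_norm_sq [DecidableEq ι] (hq : IsOrthonormalFamily μ I q)
    {h : ι} (hh : h ∈ I) : Integrable (fun y => ‖q h y‖ ^ 2) μ := by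
  have hne : ∫ y, ((‖q h y‖ ^ 2 : ℝ) : ℂ) ∂μ ≠ 0 := by
    rw [hq.integral_ofReal_norm_sq hh]; exact one_ne_zero
  simpa only [RCLike.re_to_complex, ofReal_re] using (Integrable.of_integral_ne_zero hne).re

theorem IsOrthonormalFamily.integral_norm_sq [DecidableEq ι] (hq : IsOrthonormalFamily μ I q)
    {h : ι} (hh : h ∈ I) : ∫ y, ‖q h y‖ ^ 2 ∂μ = 1 := by
  exact_mod_cast integral_complex_ofReal.symm.trans (hq.integral_ofReal_norm_sq hh)

theorem IsOrthonormalFamily.integral_norm_sum_mul_sq [DecidableEq ι]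
    (hq : IsOrthonormalFamily μ I q)
    (hint : ∀ h ∈ I, ∀ h' ∈ I, Integrable (fun y => q h y * conj (q h' y)) μ) (c : ι → ℂ) :
    ∫ y, ‖∑ h ∈ I, c h * q h y‖ ^ 2 ∂μ = ∑ h ∈ I, ‖c h‖ ^ 2 := by
  have hexpand : ∀ y, ((‖∑ h ∈ I, c h * q h y‖ ^ 2 : ℝ) : ℂ) =
      ∑ h ∈ I, ∑ h' ∈ I, c h * conj (c h') * (q h y * conj (q h' y)) := by
    intro y
    rw [ofReal_pow, ← mul_conj', map_sum, sum_mul_sum]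
    refine sum_congr rfl fun _ _ => sum_congr rfl fun _ _ => ?_
    rw [map_mul]; ring
  apply ofReal_injective
  rw [← integral_complex_ofReal]
  simp_rw [hexpand]
  rw [integral_finsetSum _ fun h hh => integrable_finsetSum _ fun h' hh' =>
    (hint h hh h' hh').const_mul _]
  push_cast
  refine sum_congr rfl fun h hh => ?_
  rw [integral_finsetSum _ fun h' hh' => (hint h hh h' hh').const_mul _,
    sum_congr rfl fun h' hh' => by rw [integral_const_mul, hq h hh h' hh']]
  simp [hh, mul_conj']

namespace IsRelaxedMZ

theorem empiricalMean_le (hMZ : IsRelaxedMZ μ I q N x η) (a : ι → ℂ) :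
    empiricalMean N x (fun y => ‖∑ h ∈ I, a h * q h y‖ ^ 2) ≤
      (1 + η) * ∫ y, ‖∑ h ∈ I, a h * q h y‖ ^ 2 ∂μ := by
  linarith [(abs_le.mp (hMZ a)).2]

theorem le_empiricalMean (hMZ : IsRelaxedMZ μ I q N x η) (a : ι → ℂ) :
    (1 - η) * ∫ y, ‖∑ h ∈ I, a h * q h y‖ ^ 2 ∂μ ≤
      empiricalMean N x (fun y => ‖∑ h ∈ I, a h * q h y‖ ^ 2) := by
  linarith [(abs_le.mp (hMZ a)).1]

theorem empiricalMean_nonpos_of_not_integrable (hMZ : IsRelaxedMZ μ I q N x η) (a : ι → ℂ)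
    (hni : ¬Integrable (fun y => ‖∑ h ∈ I, a h * q h y‖ ^ 2) μ) :
    empiricalMean N x (fun y => ‖∑ h ∈ I, a h * q h y‖ ^ 2) ≤ 0 := by
  simpa [integral_undef hni] using hMZ.empiricalMean_le a

theorem integrable_norm_add_mul_sq [DecidableEq ι] (hMZ : IsRelaxedMZ μ I q N x η)
    (hq : IsOrthonormalFamily μ I q) (hη : η < 1) {h h' : ι} (hh : h ∈ I) (hh' : h' ∈ I)
    (t : ℂ) : Integrable (fun y => ‖q h y + t * q h' y‖ ^ 2) μ := by
  have hpair : ∀ s : ℂ, ∀ y,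
      ∑ k ∈ I, (Pi.single h 1 + Pi.single h' s : ι → ℂ) k * q k y = q h y + s * q h' y := by
    intro s y
    simp only [Pi.add_apply, add_mul, sum_add_distrib, sum_pi_single_mul hh,
      sum_pi_single_mul hh', one_mul]
  have hpos : 0 < empiricalMean N x (fun y => ‖q h y‖ ^ 2) := by
    have := hMZ.le_empiricalMean (Pi.single h 1)
    simp only [sum_pi_single_mul hh, one_mul, hq.integral_norm_sq hh] at this
    linarith
  -- If `‖q h ± t q h'‖²` both failed to be integrable, their node means would vanish, hence by the
  -- parallelogram law so would the node mean of `‖q h‖²`, against the lower quadrature bound.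
  by_contra hplus
  have hminus : ¬Integrable (fun y => ‖q h y + (-t) * q h' y‖ ^ 2) μ := by
    intro hm
    have ht : Integrable (fun y => ‖-t * q h' y‖ ^ 2) μ := by
      simpa [norm_mul, mul_pow] using (hq.integrable_norm_sq hh').const_mul (‖t‖ ^ 2)
    refine hplus ?_
    simpa using ((integrable_norm_add_sq_iff_norm_sub_sq (hq.integrable_norm_sq hh) ht).mp hm)
  have h1 := hMZ.empiricalMean_nonpos_of_not_integrable (Pi.single h 1 + Pi.single h' t)
    (by simpa only [hpair] using hplus)
  have h2 := hMZ.empiricalMean_nonpos_of_not_integrable (Pi.single h 1 + Pi.single h' (-t))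
    (by simpa only [hpair] using hminus)
  simp only [hpair, neg_mul, ← sub_eq_add_neg] at h1 h2
  have hle : empiricalMean N x (fun y => ‖q h y‖ ^ 2) ≤ empiricalMean N x
      (fun y => ‖q h y + t * q h' y‖ ^ 2 + ‖q h y - t * q h' y‖ ^ 2) :=
    empiricalMean_mono fun n _ => by
      nlinarith [parallelogram_law_with_norm ℂ (q h (x n)) (t * q h' (x n)),
        sq_nonneg ‖t * q h' (x n)‖]
  rw [empiricalMean_add] at hle
  linarith

theorem integrable_mul_conj [DecidableEq ι] (hMZ : IsRelaxedMZ μ I q N x η)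
    (hq : IsOrthonormalFamily μ I q) (hη : η < 1) {h h' : ι} (hh : h ∈ I) (hh' : h' ∈ I) :
    Integrable (fun y => q h y * conj (q h' y)) μ := by
  simpa only [RCLike.inner_apply] using
    integrable_inner_of_forall_integrable_norm_add_smul_sq (𝕜 := ℂ) fun t =>
      hMZ.integrable_norm_add_mul_sq hq hη hh' hh t

theorem sqrt_integral_norm_hyperinterpolation_sq_le [DecidableEq ι]
    (hMZ : IsRelaxedMZ μ I q N x η) (hq : IsOrthonormalFamily μ I q) (hη : η < 1)
    {f : α → ℂ} {C : ℝ} (hC : 0 ≤ C) (hf : ∀ n < N, ‖f (x n)‖ ≤ C) :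
    √(∫ y, ‖hyperinterpolation I q N x f y‖ ^ 2 ∂μ) ≤ √(1 + η) * C := by
  set S := ∑ h ∈ I, ‖hyperCoeff q N x f h‖ ^ 2
  have hparseval : ∫ y, ‖hyperinterpolation I q N x f y‖ ^ 2 ∂μ = S :=
    hq.integral_norm_sum_mul_sq (fun _ hh _ hh' => hMZ.integrable_mul_conj hq hη hh hh')
      (hyperCoeff q N x f)
  have hnodes :
      empiricalMean N x (fun y => ‖hyperinterpolation I q N x f y‖ ^ 2) ≤ (1 + η) * S := by
    rw [← hparseval]; exact hMZ.empiricalMean_le (hyperCoeff q N x f)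
  have hf2 : empiricalMean N x (fun y => ‖f y‖ ^ 2) ≤ C ^ 2 :=
    empiricalMean_le_of_forall_le (sq_nonneg C) fun n hn => by gcongr; exact hf n hn
  have hS : 0 ≤ S := sum_nonneg fun _ _ => sq_nonneg _
  have hS2 : S ^ 2 ≤ (1 + η) * S * C ^ 2 := calc
    S ^ 2 = ‖empiricalMean N x (fun y => hyperinterpolation I q N x f y * conj (f y))‖ ^ 2 := by
      rw [← ofReal_sum_norm_sq_hyperCoeff, norm_real, Real.norm_of_nonneg hS]
    _ ≤ empiricalMean N x (fun y => ‖hyperinterpolation I q N x f y‖ ^ 2) *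
        empiricalMean N x (fun y => ‖f y‖ ^ 2) := sq_norm_empiricalMean_mul_conj_le _ _
    _ ≤ (1 + η) * S * C ^ 2 := by
      gcongr
      · exact empiricalMean_nonneg fun _ _ => sq_nonneg _
      · exact hnodes.trans' (empiricalMean_nonneg fun _ _ => sq_nonneg _)
  rw [hparseval]
  rcases hS.eq_or_lt with hS0 | hSpos
  · rw [← hS0, Real.sqrt_zero]; positivity
  calc √S ≤ √((1 + η) * C ^ 2) := Real.sqrt_le_sqrt (by nlinarith)
    _ = √(1 + η) * C := by rw [Real.sqrt_mul' _ (sq_nonneg C), Real.sqrt_sq hC]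

end IsRelaxedMZ

end Hyperinterpolation

theorem qmc_hyperinterpolation_operator_bound_general
    {ι : Type*} [DecidableEq ι] (d N : ℕ) (I : Finset ι)
    (q : ι → (Fin d → ℝ) → ℂ)
    (horth : ∀ h ∈ I, ∀ h' ∈ I,
      (∫ y in unitCube d, q h y * (starRingEnd ℂ) (q h' y)) =
        if h = h' then 1 else 0)
    (x : ℕ → Fin d → ℝ) (hxmem : ∀ n, x n ∈ unitCube d)
    (η : ℝ) (hη1 : η < 1)
    (hMZ : ∀ a : ι → ℂ,
      |(1 / (N : ℝ)) * ∑ n ∈ Finset.range N,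
            ‖∑ h ∈ I, a h * q h (x n)‖ ^ 2 -
          ∫ y in unitCube d, ‖∑ h ∈ I, a h * q h y‖ ^ 2| ≤
        η * ∫ y in unitCube d, ‖∑ h ∈ I, a h * q h y‖ ^ 2)
    (f : (Fin d → ℝ) → ℂ) (C : ℝ) (hf : ∀ y ∈ unitCube d, ‖f y‖ ≤ C)
    (Qf : (Fin d → ℝ) → ℂ)
    (hQf : ∀ y, Qf y = ∑ h ∈ I,
      ((1 / (N : ℂ)) * ∑ n ∈ Finset.range N, f (x n) * (starRingEnd ℂ) (q h (x n))) * q h y) :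
    Real.sqrt (∫ y in unitCube d, ‖Qf y‖ ^ 2) ≤ Real.sqrt (1 + η) * C := by
  obtain rfl : Qf = hyperinterpolation I q N x f := funext hQf
  exact IsRelaxedMZ.sqrt_integral_norm_hyperinterpolation_sq_le hMZ horth hη1
    ((norm_nonneg _).trans (hf _ (hxmem 0))) fun n _ => hf _ (hxmem n)

/-- L₂ operator bound for QMC hyperinterpolation: if the equal-weight quadrature rule
satisfies the relaxed Marcinkiewicz–Zygmund-type condition with parameter `η ∈ (0,1)`
on the span of the orthonormal family `(q_h)_{h∈I}`, then
`‖Q_I f‖_{L₂} ≤ √(1+η)·‖f‖_∞` for every bounded `f`. -/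
theorem qmc_hyperinterpolation_operator_bound
    {ι : Type*} [DecidableEq ι] (d N : ℕ) (hN : 1 ≤ N) (I : Finset ι)
    (q : ι → (Fin d → ℝ) → ℂ)
    (horth : ∀ h ∈ I, ∀ h' ∈ I,
      (∫ y in unitCube d, q h y * (starRingEnd ℂ) (q h' y)) =
        if h = h' then 1 else 0)
    (x : ℕ → Fin d → ℝ) (hxmem : ∀ n, x n ∈ unitCube d)
    (η : ℝ) (hη0 : 0 < η) (hη1 : η < 1)
    (hMZ : ∀ a : ι → ℂ,
      |(1 / (N : ℝ)) * ∑ n ∈ Finset.range N,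
            ‖∑ h ∈ I, a h * q h (x n)‖ ^ 2 -
          ∫ y in unitCube d, ‖∑ h ∈ I, a h * q h y‖ ^ 2| ≤
        η * ∫ y in unitCube d, ‖∑ h ∈ I, a h * q h y‖ ^ 2)
    (f : (Fin d → ℝ) → ℂ) (C : ℝ) (hf : ∀ y ∈ unitCube d, ‖f y‖ ≤ C)
    (Qf : (Fin d → ℝ) → ℂ)
    (hQf : ∀ y, Qf y = ∑ h ∈ I,
      ((1 / (N : ℂ)) * ∑ n ∈ Finset.range N, f (x n) * (starRingEnd ℂ) (q h (x n))) * q h y) :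
    Real.sqrt (∫ y in unitCube d, ‖Qf y‖ ^ 2) ≤ Real.sqrt (1 + η) * C :=
  qmc_hyperinterpolation_operator_bound_general d N I q horth x hxmem η hη1 hMZ f C hf Qf hQf
end

section
/- Cardinality bound for the hyperbolic cross: let α > 1/2, γ₁,…,γ_d ∈ [0,1], M ≥ 1, and define r(h) = Π_{j : hⱼ≠0} |hⱼ|^α / γⱼ for h ∈ ℤ^d (with r(0)=1, and r(h)=∞ if γⱼ=0 and hⱼ≠0 for some j). Then for any λ > 1/(2α) with 2αλ > 1, the set A_d(M) = {h ∈ ℤ^d : r(h)² ≤ M} satisfies |A_d(M)| ≤ M^λ · Π_{j=1}^d (1 + 2γⱼ^{2λ} ζ(2αλ)), where ζ is the Riemann zeta function. -/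
open Finset
open scoped ENNReal

/-- The weighted Korobov weight `r(h) = Π_{j : hⱼ≠0} |hⱼ|^α/γⱼ`, valued in `ℝ≥0∞`
(`r(h) = ∞` when some `γⱼ = 0` and `hⱼ ≠ 0`; `r(0) = 1`). -/
noncomputable def korobovWeight (d : ℕ) (α : ℝ) (γ : Fin d → ℝ) (h : Fin d → ℤ) : ℝ≥0∞ :=
  ∏ j ∈ Finset.univ.filter (fun j => h j ≠ 0),
    ((ENNReal.ofReal |(h j : ℝ)|) ^ α / ENNReal.ofReal (γ j))

lemma real_one_le_prod {ι : Type*} {s : Finset ι} {f : ι → ℝ}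
    (h : ∀ i ∈ s, 1 ≤ f i) : 1 ≤ ∏ i ∈ s, f i := by
  calc (1:ℝ) = ∏ _i ∈ s, 1 := by simp
  _ ≤ _ := Finset.prod_le_prod (by norm_num) h

lemma real_single_le_prod {ι : Type*} [DecidableEq ι] {s : Finset ι} {f : ι → ℝ}
    (h : ∀ i ∈ s, 1 ≤ f i) {j : ι} (hj : j ∈ s) : f j ≤ ∏ i ∈ s, f i := by
  rw [← Finset.mul_prod_erase s f hj]
  have h1 : 1 ≤ ∏ i ∈ s.erase j, f i :=
    real_one_le_prod (fun i hi => h i (Finset.mem_of_mem_erase hi))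
  exact le_mul_of_one_le_right (by linarith [h j hj]) h1

lemma korobov_real (d : ℕ) (α : ℝ) (hα0 : 0 < α) (γ : Fin d → ℝ) (hγ0 : ∀ j, 0 ≤ γ j)
    (hγ1 : ∀ j, γ j ≤ 1) (M : ℝ) (hM : 1 ≤ M) (h : Fin d → ℤ)
    (H : korobovWeight d α γ h ^ 2 ≤ ENNReal.ofReal M) :
    (∀ j, h j ≠ 0 → 0 < γ j) ∧
    (∏ j ∈ Finset.univ.filter (fun j => h j ≠ 0), (|(h j : ℝ)| ^ α / γ j)) ^ 2 ≤ M := by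
  classical
  set S := Finset.univ.filter (fun j : Fin d => h j ≠ 0) with hS
  have habs : ∀ j ∈ S, (1:ℝ) ≤ |(h j : ℝ)| := by
    intro j hj
    have hj' : h j ≠ 0 := by simpa [hS] using hj
    have : (1:ℤ) ≤ |h j| := Int.one_le_abs hj'
    calc (1:ℝ) ≤ ((|h j| : ℤ) : ℝ) := by exact_mod_cast this
    _ = |(h j : ℝ)| := by push_cast; ring
  have hnum1 : ∀ j ∈ S, (1:ℝ≥0∞) ≤ (ENNReal.ofReal |(h j : ℝ)|) ^ α := by
    intro j hj
    calc (1:ℝ≥0∞) = 1 ^ α := (ENNReal.one_rpow α).symm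
    _ ≤ _ := by
        apply ENNReal.rpow_le_rpow _ hα0.le
        rw [← ENNReal.ofReal_one]
        exact ENNReal.ofReal_le_ofReal (habs j hj)
  have hfac1 : ∀ j ∈ S, (1:ℝ≥0∞) ≤ (ENNReal.ofReal |(h j : ℝ)|) ^ α / ENNReal.ofReal (γ j) := by
    intro j hj
    calc (1:ℝ≥0∞) = 1 / 1 := by simp
    _ ≤ _ := by
        apply ENNReal.div_le_div (hnum1 j hj)
        rw [← ENNReal.ofReal_one]
        exact ENNReal.ofReal_le_ofReal (hγ1 j)
  have hK1 : (1:ℝ≥0∞) ≤ korobovWeight d α γ h := Finset.one_le_prod' hfac1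
  have hKle : korobovWeight d α γ h ≤ ENNReal.ofReal M :=
    le_trans (le_self_pow₀ hK1 two_ne_zero) H
  have hKtop : korobovWeight d α γ h ≠ ⊤ := ne_top_of_le_ne_top ENNReal.ofReal_ne_top hKle
  have hγpos : ∀ j, h j ≠ 0 → 0 < γ j := by
    intro j hj
    rcases (hγ0 j).lt_or_eq with hp | hp
    · exact hp
    · exfalso
      have hjS : j ∈ S := by simp [hS, hj]
      have hne : (ENNReal.ofReal |(h j : ℝ)|) ^ α ≠ 0 := by
        intro h0
        have := hnum1 j hjS
        rw [h0] at this
        simp at this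
      have hfac : (ENNReal.ofReal |(h j : ℝ)|) ^ α / ENNReal.ofReal (γ j) = ⊤ := by
        rw [← hp, ENNReal.ofReal_zero, ENNReal.div_zero hne]
      have := Finset.single_le_prod' hfac1 hjS
      rw [hfac] at this
      exact hKtop (top_le_iff.mp this)
  have hre : korobovWeight d α γ h
      = ENNReal.ofReal (∏ j ∈ S, (|(h j : ℝ)| ^ α / γ j)) := by
    rw [korobovWeight, ENNReal.ofReal_prod_of_nonneg]
    · apply Finset.prod_congr rfl
      intro j hj
      have hj' : h j ≠ 0 := by simpa [hS] using hj
      rw [ENNReal.ofReal_div_of_pos (hγpos j hj'),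
        ENNReal.ofReal_rpow_of_nonneg (abs_nonneg _) hα0.le]
    · intro j _
      exact div_nonneg (Real.rpow_nonneg (abs_nonneg _) _) (hγ0 j)
  refine ⟨hγpos, ?_⟩
  have hRnn : 0 ≤ ∏ j ∈ S, (|(h j : ℝ)| ^ α / γ j) :=
    Finset.prod_nonneg fun j _ => div_nonneg (Real.rpow_nonneg (abs_nonneg _) _) (hγ0 j)
  rw [hre, ← ENNReal.ofReal_pow hRnn] at H
  exact (ENNReal.ofReal_le_ofReal_iff (by linarith)).mp H


/-- Cardinality bound for the hyperbolic cross
`A_d(M) = {h ∈ ℤ^d : r(h)² ≤ M}`: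
`|A_d(M)| ≤ M^λ Π_j (1 + 2γⱼ^{2λ} ζ(2αλ))` for any `λ > 1/(2α)`. -/
theorem hyperbolic_cross_cardinality_bound (d : ℕ) (α : ℝ) (hα : 1 / 2 < α)
    (γ : Fin d → ℝ) (hγ0 : ∀ j, 0 ≤ γ j) (hγ1 : ∀ j, γ j ≤ 1)
    (M : ℝ) (hM : 1 ≤ M) (l : ℝ) (hl : 1 / (2 * α) < l) (hl' : 1 < 2 * α * l) :
    (setOf (fun h : Fin d → ℤ =>
        (korobovWeight d α γ h) ^ 2 ≤ ENNReal.ofReal M)).Finite ∧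
    ((setOf (fun h : Fin d → ℤ =>
        (korobovWeight d α γ h) ^ 2 ≤ ENNReal.ofReal M)).ncard : ℝ) ≤
      M ^ l * ∏ j, (1 + 2 * γ j ^ (2 * l) *
        ∑' t : ℕ+, ((t : ℝ) ^ (-(2 * α * l)))) := by
  classical
  have hα0 : 0 < α := by linarith
  have hl0 : 0 < l := lt_trans (by positivity) hl
  set N : ℕ := ⌈M ^ (1 / (2 * α))⌉₊ with hNdef
  set w : Fin d → ℤ → ℝ :=
    fun j n => if n = 0 then 1 else γ j ^ (2 * l) * |(n : ℝ)| ^ (-(2 * α * l)) with hw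
  have hw0 : ∀ j n, 0 ≤ w j n := by
    intro j n
    rw [hw]
    dsimp only
    split
    · norm_num
    · exact mul_nonneg (Real.rpow_nonneg (hγ0 j) _) (Real.rpow_nonneg (abs_nonneg _) _)
  set Z := ∑' t : ℕ+, ((t : ℝ) ^ (-(2 * α * l))) with hZ
  have key : ∀ h : Fin d → ℤ, korobovWeight d α γ h ^ 2 ≤ ENNReal.ofReal M →
      (∀ j, h j ≠ 0 → 0 < γ j) ∧
      (∏ j ∈ Finset.univ.filter (fun j => h j ≠ 0), (|(h j : ℝ)| ^ α / γ j)) ^ 2 ≤ M :=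
    fun h H => korobov_real d α hα0 γ hγ0 hγ1 M hM h H
  have habs1 : ∀ (h : Fin d → ℤ) (j : Fin d), h j ≠ 0 → (1:ℝ) ≤ |(h j : ℝ)| := by
    intro h j hj
    have h1 : (1:ℤ) ≤ |h j| := Int.one_le_abs hj
    calc (1:ℝ) ≤ ((|h j| : ℤ) : ℝ) := by exact_mod_cast h1
    _ = |(h j : ℝ)| := by push_cast; ring
  have hfacone : ∀ (h : Fin d → ℤ), (∀ j, h j ≠ 0 → 0 < γ j) →
      ∀ i ∈ Finset.univ.filter (fun j : Fin d => h j ≠ 0), (1:ℝ) ≤ |(h i : ℝ)| ^ α / γ i := by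
    intro h hγp i hi
    have hi' : h i ≠ 0 := by simpa using hi
    rw [one_le_div (hγp i hi')]
    exact le_trans (hγ1 i) (Real.one_le_rpow (habs1 h i hi') hα0.le)
  have subbox : ∀ h : Fin d → ℤ, korobovWeight d α γ h ^ 2 ≤ ENNReal.ofReal M →
      ∀ j, h j ∈ Finset.Icc (-(N:ℤ)) (N:ℤ) := by
    intro h H j
    obtain ⟨hγp, hR2⟩ := key h H
    rcases eq_or_ne (h j) 0 with h0 | h0
    · rw [h0, Finset.mem_Icc]
      constructor <;> omega
    · have hjS : j ∈ Finset.univ.filter (fun j : Fin d => h j ≠ 0) := by simp [h0]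
      have hxR : |(h j : ℝ)| ^ α / γ j
          ≤ ∏ i ∈ Finset.univ.filter (fun i : Fin d => h i ≠ 0), (|(h i : ℝ)| ^ α / γ i) :=
        real_single_le_prod (hfacone h hγp) hjS
      have hxx : |(h j : ℝ)| ^ α ≤ |(h j : ℝ)| ^ α / γ j := by
        rw [le_div_iff₀ (hγp j h0)]
        exact mul_le_of_le_one_right (Real.rpow_nonneg (abs_nonneg _) _) (hγ1 j)
      have h2 : (|(h j : ℝ)| ^ α) ^ 2 ≤ M :=
        le_trans (pow_le_pow_left₀ (Real.rpow_nonneg (abs_nonneg _) _) (hxx.trans hxR) 2) hR2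
      have h3 : |(h j : ℝ)| ^ (α * 2) ≤ M := by
        rw [Real.rpow_mul (abs_nonneg _), show (2:ℝ) = ((2:ℕ):ℝ) by norm_num,
          Real.rpow_natCast]
        exact h2
      have h4 : |(h j : ℝ)| ≤ M ^ (1 / (2 * α)) := by
        have h5 := Real.rpow_le_rpow (Real.rpow_nonneg (abs_nonneg _) _) h3
          (le_of_lt (by positivity : (0:ℝ) < 1 / (α * 2)))
        rwa [← Real.rpow_mul (abs_nonneg _), mul_one_div,
          div_self (by positivity : (α * 2 : ℝ) ≠ 0), Real.rpow_one,
          show 1 / (α * 2) = 1 / (2 * α) by ring] at h5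
      have h5 : |(h j : ℝ)| ≤ (N : ℝ) := h4.trans (Nat.le_ceil _)
      have h6 : |h j| ≤ (N : ℤ) := by
        have : ((|h j| : ℤ) : ℝ) ≤ ((N : ℤ) : ℝ) := by push_cast; push_cast at h5; linarith
        exact_mod_cast this
      rw [Finset.mem_Icc]
      exact abs_le.mp h6
  set Box : Finset (Fin d → ℤ) :=
    Fintype.piFinset fun _ : Fin d => Finset.Icc (-(N:ℤ)) (N:ℤ) with hBox
  have subbox' : ∀ h : Fin d → ℤ, korobovWeight d α γ h ^ 2 ≤ ENNReal.ofReal M →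
      h ∈ Box := fun h H => Fintype.mem_piFinset.mpr (subbox h H)
  -- per-element bound
  have helt : ∀ h : Fin d → ℤ, korobovWeight d α γ h ^ 2 ≤ ENNReal.ofReal M →
      1 ≤ M ^ l * ∏ j, w j (h j) := by
    intro h H
    obtain ⟨hγp, hR2⟩ := key h H
    set S := Finset.univ.filter (fun j : Fin d => h j ≠ 0) with hS
    set R := ∏ j ∈ S, (|(h j : ℝ)| ^ α / γ j) with hRdef
    have hR1 : (1:ℝ) ≤ R := real_one_le_prod (hfacone h hγp)
    have hRpos : (0:ℝ) < R := lt_of_lt_of_le one_pos hR1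
    have hprodw : ∏ j, w j (h j) = R ^ (-(2 * l)) := by
      have h1 : ∏ j ∈ S, w j (h j) = ∏ j, w j (h j) :=
        Finset.prod_filter_of_ne (fun x _ hx => by
          intro h0
          apply hx
          simp [hw, h0])
      have h2 : ∀ j ∈ S, w j (h j) = (|(h j : ℝ)| ^ α / γ j) ^ (-(2 * l)) := by
        intro j hj
        have hj' : h j ≠ 0 := by simpa [hS] using hj
        rw [hw]
        dsimp only
        rw [if_neg hj',
          Real.div_rpow (Real.rpow_nonneg (abs_nonneg _) _) (hγ0 j),
          ← Real.rpow_mul (abs_nonneg _), Real.rpow_neg (hγ0 j), div_inv_eq_mul,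
          show α * -(2 * l) = -(2 * α * l) by ring, mul_comm]
      rw [← h1, Finset.prod_congr rfl h2,
        Real.finset_prod_rpow _ _
          (fun i _ => div_nonneg (Real.rpow_nonneg (abs_nonneg _) _) (hγ0 i)) _,
        ← hRdef]
    have hMl : R ^ (2 * l) ≤ M ^ l := by
      have hh : (R ^ 2) ^ l ≤ M ^ l := Real.rpow_le_rpow (by positivity) hR2 hl0.le
      calc R ^ (2 * l) = (R ^ (2:ℕ)) ^ l := by
            rw [← Real.rpow_natCast R 2, ← Real.rpow_mul hRpos.le]
            norm_num
      _ ≤ M ^ l := hh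
    calc (1:ℝ) = R ^ (2 * l) * R ^ (-(2 * l)) := by
          rw [← Real.rpow_add hRpos]
          simp
    _ ≤ M ^ l * R ^ (-(2 * l)) :=
        mul_le_mul_of_nonneg_right hMl (Real.rpow_nonneg hRpos.le _)
    _ = M ^ l * ∏ j, w j (h j) := by rw [hprodw]
  -- summability and half-sum bound
  have hsummable : Summable (fun t : ℕ+ => ((t : ℝ) ^ (-(2 * α * l)))) := by
    have hs : Summable (fun n : ℕ => ((n : ℝ) ^ (-(2 * α * l)))) :=
      Real.summable_nat_rpow.mpr (by linarith)
    exact hs.comp_injective (fun a b hab => PNat.coe_injective hab)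
  have hhalfsum : ∑ k ∈ Finset.range N, ((k + 1 : ℕ) : ℝ) ^ (-(2 * α * l)) ≤ Z := by
    have heq : ∑ k ∈ Finset.range N, ((k + 1 : ℕ) : ℝ) ^ (-(2 * α * l))
        = ∑ t ∈ (Finset.range N).map ⟨Nat.succPNat, Nat.succPNat_injective⟩,
            ((t : ℝ) ^ (-(2 * α * l))) := by
      rw [Finset.sum_map]
      apply Finset.sum_congr rfl
      intro k _
      norm_num [Nat.succPNat]
    rw [heq, hZ]
    exact Summable.sum_le_tsum _ (fun t _ => Real.rpow_nonneg (by positivity) _) hsummable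
  have hrow : ∀ j, ∑ n ∈ Finset.Icc (-(N:ℤ)) (N:ℤ), w j n ≤ 1 + 2 * γ j ^ (2 * l) * Z := by
    intro j
    have h0mem : (0:ℤ) ∈ Finset.Icc (-(N:ℤ)) (N:ℤ) := by
      rw [Finset.mem_Icc]; omega
    rw [Finset.sum_eq_sum_sdiff_singleton_add h0mem]
    have hw00 : w j 0 = 1 := by simp [hw]
    have hsplit : Finset.Icc (-(N:ℤ)) (N:ℤ) \ {0}
        = Finset.Icc (-(N:ℤ)) (-1) ∪ Finset.Icc 1 (N:ℤ) := by
      ext n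
      simp only [Finset.mem_sdiff, Finset.mem_Icc, Finset.mem_union, Finset.mem_singleton]
      omega
    have hdisj : Disjoint (Finset.Icc (-(N:ℤ)) (-1)) (Finset.Icc 1 (N:ℤ)) := by
      rw [Finset.disjoint_left]
      intro n hn hn'
      rw [Finset.mem_Icc] at hn hn'
      omega
    have hval : ∀ k ∈ Finset.range N,
        w j ((k:ℤ) + 1) = γ j ^ (2 * l) * ((k + 1 : ℕ) : ℝ) ^ (-(2 * α * l)) := by
      intro k _
      rw [hw]
      dsimp only
      rw [if_neg (by omega)]
      congr 2
      rw [abs_of_nonneg (by positivity)]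
      push_cast
      ring
    have hval' : ∀ k ∈ Finset.range N,
        w j (-(k:ℤ) - 1) = γ j ^ (2 * l) * ((k + 1 : ℕ) : ℝ) ^ (-(2 * α * l)) := by
      intro k _
      rw [hw]
      dsimp only
      rw [if_neg (by omega)]
      congr 2
      rw [show (((-(k:ℤ) - 1 : ℤ)) : ℝ) = -((k:ℝ) + 1) by push_cast; ring, abs_neg,
        abs_of_nonneg (by positivity)]
      push_cast
      ring
    have hposseg : ∑ n ∈ Finset.Icc (1:ℤ) (N:ℤ), w j n
        = ∑ k ∈ Finset.range N, w j ((k:ℤ) + 1) := by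
      refine Finset.sum_nbij' (i := fun n => (n - 1).toNat) (j := fun k => (k:ℤ) + 1) ?_ ?_ ?_ ?_ ?_
      · intro a ha
        rw [Finset.mem_Icc] at ha
        rw [Finset.mem_range]
        omega
      · intro a ha
        rw [Finset.mem_range] at ha
        rw [Finset.mem_Icc]
        omega
      · intro a ha
        rw [Finset.mem_Icc] at ha
        omega
      · intro a ha
        rw [Finset.mem_range] at ha
        omega
      · intro a ha
        rw [Finset.mem_Icc] at ha
        rw [show (((a - 1).toNat : ℤ)) + 1 = a by omega]
    have hnegseg : ∑ n ∈ Finset.Icc (-(N:ℤ)) (-1:ℤ), w j n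
        = ∑ k ∈ Finset.range N, w j (-(k:ℤ) - 1) := by
      refine Finset.sum_nbij' (i := fun n => (-n - 1).toNat) (j := fun k => -(k:ℤ) - 1) ?_ ?_ ?_ ?_ ?_
      · intro a ha
        rw [Finset.mem_Icc] at ha
        rw [Finset.mem_range]
        omega
      · intro a ha
        rw [Finset.mem_range] at ha
        rw [Finset.mem_Icc]
        omega
      · intro a ha
        rw [Finset.mem_Icc] at ha
        omega
      · intro a ha
        rw [Finset.mem_range] at ha
        omega
      · intro a ha
        rw [Finset.mem_Icc] at ha
        rw [show -(((-a - 1).toNat : ℤ)) - 1 = a by omega]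
    rw [hw00, hsplit, Finset.sum_union hdisj, hnegseg, hposseg,
      Finset.sum_congr rfl hval, Finset.sum_congr rfl hval', ← Finset.mul_sum]
    have hγl : (0:ℝ) ≤ γ j ^ (2 * l) := Real.rpow_nonneg (hγ0 j) _
    have hT := mul_le_mul_of_nonneg_left hhalfsum hγl
    linarith
  -- assemble
  set F := Box.filter (fun h => korobovWeight d α γ h ^ 2 ≤ ENNReal.ofReal M) with hF
  have hAF : (setOf (fun h : Fin d → ℤ =>
      (korobovWeight d α γ h) ^ 2 ≤ ENNReal.ofReal M)) = ↑F := by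
    ext h
    simp only [Set.mem_setOf_eq, hF, Finset.coe_filter, Finset.mem_coe, Finset.mem_filter]
    exact ⟨fun H => ⟨subbox' h H, H⟩, fun ⟨_, H⟩ => H⟩
  constructor
  · rw [hAF]
    exact F.finite_toSet
  · rw [hAF, Set.ncard_coe_finset]
    have hM0 : (0:ℝ) ≤ M := by linarith
    calc (F.card : ℝ) = ∑ _h ∈ F, (1:ℝ) := by simp
    _ ≤ ∑ h ∈ F, (M ^ l * ∏ j, w j (h j)) := by
        apply Finset.sum_le_sum
        intro h hh
        rw [hF, Finset.mem_filter] at hh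
        exact helt h hh.2
    _ ≤ ∑ h ∈ Box, (M ^ l * ∏ j, w j (h j)) := by
        apply Finset.sum_le_sum_of_subset_of_nonneg (Finset.filter_subset _ _)
        intro h _ _
        exact mul_nonneg (Real.rpow_nonneg hM0 _) (Finset.prod_nonneg fun j _ => hw0 j (h j))
    _ = M ^ l * ∑ h ∈ Box, ∏ j, w j (h j) := by rw [Finset.mul_sum]
    _ = M ^ l * ∏ j, ∑ n ∈ Finset.Icc (-(N:ℤ)) (N:ℤ), w j n := by
        rw [Finset.prod_univ_sum]
    _ ≤ M ^ l * ∏ j, (1 + 2 * γ j ^ (2 * l) * Z) := by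
        apply mul_le_mul_of_nonneg_left _ (Real.rpow_nonneg hM0 _)
        exact Finset.prod_le_prod (fun j _ => Finset.sum_nonneg fun n _ => hw0 j n)
          (fun j _ => hrow j)
end

section
/- Cardinality bound for the Walsh hyperbolic cross: let b ≥ 2 be an integer, α > 1/2, γ₁,…,γ_d ∈ [0,1], M ≥ 1, and define ř(h) = Π_{j : hⱼ≠0} b^{α μ₁(hⱼ)}/γⱼ for h ∈ ℕ₀^d, where μ₁(h) is the one-based position of the most significant nonzero base-b digit of h. Then for any λ ∈ (1/(2α), 1], the set Ǎ_d(M) = {h ∈ ℕ₀^d : ř(h)² ≤ M} satisfies |Ǎ_d(M)| ≤ M^λ · Π_{j=1}^d (1 + γⱼ^{2λ}·(b−1)/(b^{2αλ} − b)). -/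
open Finset
open scoped ENNReal

/-- `μ₁(0) = 0`, and `μ₁(h)` is the one-based position of the most significant
nonzero base-`b` digit of `h`. -/
def mu1 (b h : ℕ) : ℕ := (Nat.digits b h).length

/-- The weighted Walsh weight `ř(h) = Π_{j : hⱼ≠0} b^{α μ₁(hⱼ)}/γⱼ`, valued in `ℝ≥0∞`
(`ř(h) = ∞` when some `γⱼ = 0` and `hⱼ ≠ 0`; `ř(0) = 1`). -/
noncomputable def walshCrossWeight (b d : ℕ) (α : ℝ) (γ : Fin d → ℝ)
    (h : Fin d → ℕ) : ℝ≥0∞ :=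
  ∏ j ∈ Finset.univ.filter (fun j => h j ≠ 0),
    ((b : ℝ≥0∞) ^ (α * (mu1 b (h j) : ℝ)) / ENNReal.ofReal (γ j))

/-! Rankin's trick: on `Ǎ_d(M)` one has `1 ≤ (M / ř(h)²)^λ`, so `|Ǎ_d(M)| ≤ M^λ Σ_h ř(h)^{-2λ}`.
This sum factorises over the coordinates, and in one coordinate the `(b-1)b^(ℓ-1)` integers with
`μ₁ = ℓ` contribute `γ^{2λ}(b-1)b^(ℓ-1)b^{-2αλℓ}`: a geometric series, convergent because
`2αλ > 1`, with sum `γ^{2λ}(b-1)/(b^{2αλ}-b)`. -/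

theorem ENNReal.encard_setOf_le_le_rpow_mul_tsum {X : Type*} (f : X → ℝ≥0∞) {c : ℝ≥0∞}
    (hc₀ : c ≠ 0) (hc : c ≠ ⊤) {p : ℝ} (hp : 0 ≤ p) :
    ({x | f x ≤ c}.encard : ℝ≥0∞) ≤ c ^ p * ∑' x, f x ^ (-p) := by
  have one_le : ∀ x, f x ≤ c → 1 ≤ c ^ p * f x ^ (-p) := fun x hx => by
    rw [ENNReal.rpow_neg, ← div_eq_mul_inv,
      ENNReal.le_div_iff_mul_le (.inr (ENNReal.rpow_pos_of_nonneg (pos_iff_ne_zero.2 hc₀) hp).ne')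
        (.inr (ENNReal.rpow_ne_top_of_nonneg hp hc)), one_mul]
    exact ENNReal.rpow_le_rpow hx hp
  calc ({x | f x ≤ c}.encard : ℝ≥0∞) = ∑' x : {x | f x ≤ c}, 1 := (ENNReal.tsum_set_one _).symm
    _ ≤ ∑' x : {x | f x ≤ c}, c ^ p * f x ^ (-p) := ENNReal.tsum_le_tsum fun x => one_le x x.2
    _ ≤ ∑' x, c ^ p * f x ^ (-p) :=
      ENNReal.tsum_comp_le_tsum_of_injective Subtype.val_injective (fun x => c ^ p * f x ^ (-p))
    _ = c ^ p * ∑' x, f x ^ (-p) := ENNReal.tsum_mul_left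

theorem Set.finite_and_ncard_le_of_encard_le_ofReal {X : Type*} {s : Set X} {B : ℝ} (hB : 0 ≤ B)
    (hs : (s.encard : ℝ≥0∞) ≤ ENNReal.ofReal B) : s.Finite ∧ (s.ncard : ℝ) ≤ B := by
  have hfin : s.Finite := Set.encard_ne_top_iff.1 fun h => by simp [h] at hs
  refine ⟨hfin, ?_⟩
  rw [← hfin.cast_ncard_eq] at hs
  have hs' : (s.ncard : ℝ≥0∞) ≤ ENNReal.ofReal B := by simpa using hs
  simpa using ENNReal.toReal_le_of_le_ofReal hB hs'

theorem ENNReal.prod_rpow_of_ne_zero {ι : Type*} {s : Finset ι} {f : ι → ℝ≥0∞}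
    (hf : ∀ i ∈ s, f i ≠ 0) (r : ℝ) : ∏ i ∈ s, f i ^ r = (∏ i ∈ s, f i) ^ r := by
  classical
  induction s using Finset.induction with
  | empty => simp
  | insert i s hi ih =>
    have hf' : ∀ i ∈ s, f i ≠ 0 := fun i hi ↦ hf i (mem_insert_of_mem hi)
    rw [prod_insert hi, prod_insert hi, ih hf',
      ← ENNReal.mul_rpow_of_ne_zero (hf i (mem_insert_self ..)) (prod_ne_zero_iff.2 hf')]

theorem ENNReal.tsum_pi_prod : ∀ {d : ℕ} {β : Fin d → Type*} (t : ∀ j, β j → ℝ≥0∞),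
    ∑' h : (∀ j, β j), ∏ j, t j (h j) = ∏ j, ∑' m, t j m
  | 0, β, t => by simp
  | d + 1, β, t => by
    rw [← (Fin.consEquiv β).tsum_eq, Fin.prod_univ_succ, ← ENNReal.tsum_pi_prod (fun j => t j.succ),
      ← ENNReal.tsum_mul_right]
    simp [Fin.consEquiv, Fin.prod_univ_succ, ENNReal.tsum_prod', ENNReal.tsum_mul_left]

section mu1

variable {b : ℕ}

theorem mu1_eq_zero_iff {m : ℕ} : mu1 b m = 0 ↔ m = 0 :=
  List.length_eq_zero_iff.trans Nat.digits_eq_nil_iff_eq_zero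

theorem mu1_eq_succ_of_mem_Ico (hb : 1 < b) {m L : ℕ} (hm : m ∈ Ico (b ^ L) (b ^ (L + 1))) :
    mu1 b m = L + 1 := by
  rw [mem_Ico] at hm
  exact le_antisymm ((Nat.digits_length_le_iff hb m).2 hm.2)
    ((Nat.lt_digits_length_iff hb m).2 hm.1)

theorem sum_range_pow_comp_mu1 {M : Type*} [AddCommMonoid M] (hb : 1 < b) (f : ℕ → M) (L : ℕ) :
    ∑ m ∈ range (b ^ L), f (mu1 b m) = f 0 + ∑ ℓ ∈ range L, ((b - 1) * b ^ ℓ) • f (ℓ + 1) := by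
  induction L with
  | zero => simp [mu1]
  | succ L ih =>
    rw [← sum_range_add_sum_Ico _ (Nat.pow_le_pow_right (by omega) L.le_succ), ih,
      sum_congr rfl fun m hm => congrArg f (mu1_eq_succ_of_mem_Ico hb hm), sum_const,
      Nat.card_Ico, sum_range_succ, add_assoc]
    congr 3
    rw [pow_succ, ← Nat.mul_sub_one, mul_comm]

theorem tsum_comp_mu1 (hb : 1 < b) (f : ℕ → ℝ≥0∞) :
    ∑' m, f (mu1 b m) = f 0 + ∑' ℓ, ((b - 1) * b ^ ℓ : ℕ) * f (ℓ + 1) := by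
  rw [ENNReal.tsum_eq_iSup_nat' (tendsto_pow_atTop_atTop_of_one_lt hb),
    ENNReal.tsum_eq_iSup_nat, ENNReal.add_iSup]
  simp_rw [sum_range_pow_comp_mu1 hb, nsmul_eq_mul]

end mu1

theorem natCast_lt_rpow {b : ℕ} (hb : 1 < b) {s : ℝ} (hs : 1 < s) : (b : ℝ) < b ^ s := by
  simpa using Real.rpow_lt_rpow_of_exponent_lt (by exact_mod_cast hb : (1 : ℝ) < b) hs

theorem natCast_sub_one_div_rpow_sub_nonneg {b : ℕ} (hb : 1 < b) {s : ℝ} (hs : 1 < s) :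
    0 ≤ ((b : ℝ) - 1) / (b ^ s - b) :=
  div_nonneg (sub_nonneg.2 (by exact_mod_cast hb.le)) (sub_nonneg.2 (natCast_lt_rpow hb hs).le)

theorem tsum_levelCount_mul_rpow_neg {b : ℕ} (hb : 1 < b) {s : ℝ} (hs : 1 < s) :
    ∑' ℓ, ((b - 1) * b ^ ℓ : ℕ) * ((b : ℝ≥0∞) ^ (-s)) ^ (ℓ + 1) =
      ENNReal.ofReal ((b - 1) / (b ^ s - b)) := by
  have hb₀ : (0 : ℝ) < b := by positivity
  have hbs := natCast_lt_rpow hb hs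
  have hq : (b : ℝ≥0∞) ^ (-s) = ENNReal.ofReal (b ^ (-s)) := by
    rw [← ENNReal.ofReal_natCast, ENNReal.ofReal_rpow_of_pos hb₀]
  have hratio : b * b ^ (-s) < (1 : ℝ) := by
    rw [Real.rpow_neg hb₀.le, ← div_eq_mul_inv, div_lt_one (by positivity)]
    exact hbs
  calc ∑' ℓ, ((b - 1) * b ^ ℓ : ℕ) * ((b : ℝ≥0∞) ^ (-s)) ^ (ℓ + 1)
      = ∑' ℓ, ((b - 1 : ℕ) * (b : ℝ≥0∞) ^ (-s)) * (b * (b : ℝ≥0∞) ^ (-s)) ^ ℓ := by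
        congr 1; ext ℓ; push_cast; ring
    _ = ENNReal.ofReal ((b - 1) * b ^ (-s)) * (1 - ENNReal.ofReal (b * b ^ (-s)))⁻¹ := by
        rw [ENNReal.tsum_mul_left, ENNReal.tsum_geometric, hq, ← ENNReal.ofReal_natCast,
          ← ENNReal.ofReal_natCast b, ← ENNReal.ofReal_mul (by positivity),
          ← ENNReal.ofReal_mul (Nat.cast_nonneg _), Nat.cast_sub hb.le, Nat.cast_one]
    _ = ENNReal.ofReal ((b - 1) / (b ^ s - b)) := by
        rw [← ENNReal.ofReal_one, ← ENNReal.ofReal_sub _ (by positivity),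
          ← ENNReal.ofReal_inv_of_pos (by linarith), ←
          ENNReal.ofReal_mul (mul_nonneg (sub_nonneg.2 (by exact_mod_cast hb.le)) (by positivity))]
        congr 1
        rw [Real.rpow_neg hb₀.le]
        field_simp

noncomputable def walshWeight (b : ℕ) (α γ : ℝ) (m : ℕ) : ℝ≥0∞ :=
  if m = 0 then 1 else (b : ℝ≥0∞) ^ (α * (mu1 b m : ℝ)) / ENNReal.ofReal γ

section walshWeight

variable {b : ℕ} {α γ : ℝ}

theorem walshCrossWeight_eq_prod (d : ℕ) (γ : Fin d → ℝ) (h : Fin d → ℕ) :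
    walshCrossWeight b d α γ h = ∏ j, walshWeight b α (γ j) (h j) := by
  rw [walshCrossWeight, prod_filter]
  simp only [walshWeight, ite_not]

theorem walshWeight_ne_zero (hb : b ≠ 0) (m : ℕ) : walshWeight b α γ m ≠ 0 := by
  unfold walshWeight
  split_ifs
  · exact one_ne_zero
  · exact ENNReal.div_ne_zero.2 ⟨by simp [hb], ENNReal.ofReal_ne_top⟩

theorem walshWeight_rpow_neg (hb : b ≠ 0) (p : ℝ) (m : ℕ) :
    walshWeight b α γ m ^ (-p) =
      if m = 0 then 1 else ENNReal.ofReal γ ^ p * ((b : ℝ≥0∞) ^ (-(α * p))) ^ mu1 b m := by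
  unfold walshWeight
  split_ifs
  · simp
  · rw [div_eq_mul_inv, ENNReal.mul_rpow_of_ne_zero (by simp [hb])
      (ENNReal.inv_ne_zero.2 ENNReal.ofReal_ne_top), ENNReal.inv_rpow,
      ENNReal.rpow_neg (ENNReal.ofReal γ), inv_inv, mul_comm, ← ENNReal.rpow_mul,
      ← ENNReal.rpow_natCast, ← ENNReal.rpow_mul]
    ring_nf

theorem tsum_walshWeight_rpow_neg (hb : 1 < b) (hγ : 0 ≤ γ) {p : ℝ} (hp : 0 ≤ p)
    (hαp : 1 < α * p) :
    ∑' m, walshWeight b α γ m ^ (-p) =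
      ENNReal.ofReal (1 + γ ^ p * ((b - 1) / (b ^ (α * p) - b))) := by
  have hb₀ : b ≠ 0 := by omega
  set f : ℕ → ℝ≥0∞ := fun ℓ => if ℓ = 0 then 1 else
    ENNReal.ofReal γ ^ p * ((b : ℝ≥0∞) ^ (-(α * p))) ^ ℓ
  have hmu1 : ∀ m, walshWeight b α γ m ^ (-p) = f (mu1 b m) := fun m => by
    simp only [walshWeight_rpow_neg hb₀, f, mu1_eq_zero_iff]
  rw [tsum_congr hmu1, tsum_comp_mu1 hb]
  simp only [f, if_pos, Nat.succ_ne_zero, if_false]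
  simp_rw [mul_left_comm _ (ENNReal.ofReal γ ^ p)]
  rw [ENNReal.tsum_mul_left, tsum_levelCount_mul_rpow_neg hb hαp,
    ENNReal.ofReal_rpow_of_nonneg hγ hp, ← ENNReal.ofReal_mul (by positivity),
    ← ENNReal.ofReal_one, ← ENNReal.ofReal_add zero_le_one]
  exact mul_nonneg (by positivity) (natCast_sub_one_div_rpow_sub_nonneg hb hαp)

end walshWeight

theorem walsh_hyperbolic_cross_cardinality_bound_general (b d : ℕ) (hb : 2 ≤ b)
    (α : ℝ) (hα : 1 / 2 < α)
    (γ : Fin d → ℝ) (hγ0 : ∀ j, 0 ≤ γ j)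
    (M : ℝ) (hM : 1 ≤ M) (l : ℝ) (hl : 1 / (2 * α) < l) :
    (setOf (fun h : Fin d → ℕ =>
        (walshCrossWeight b d α γ h) ^ 2 ≤ ENNReal.ofReal M)).Finite ∧
    ((setOf (fun h : Fin d → ℕ =>
        (walshCrossWeight b d α γ h) ^ 2 ≤ ENNReal.ofReal M)).ncard : ℝ) ≤
      M ^ l * ∏ j, (1 + γ j ^ (2 * l) *
        (((b : ℝ) - 1) / ((b : ℝ) ^ (2 * α * l) - (b : ℝ)))) := by
  have hl₀ : 0 < l := lt_trans (by positivity) hl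
  have hαl : 1 < 2 * α * l := by
    rw [div_lt_iff₀ (by linarith)] at hl
    linarith
  have hfactor : ∀ j, 0 ≤ 1 + γ j ^ (2 * l) * (((b : ℝ) - 1) / ((b : ℝ) ^ (2 * α * l) - b)) :=
    fun j => add_nonneg zero_le_one <| mul_nonneg (Real.rpow_nonneg (hγ0 j) _) <|
      natCast_sub_one_div_rpow_sub_nonneg hb hαl
  have hcoord : ∀ j, ∑' m, walshWeight b α (γ j) m ^ (-(2 * l)) =
      ENNReal.ofReal (1 + γ j ^ (2 * l) * (((b : ℝ) - 1) / ((b : ℝ) ^ (2 * α * l) - b))) :=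
    fun j => by
      rw [tsum_walshWeight_rpow_neg hb (hγ0 j) (by positivity) (by linarith), ← mul_assoc,
        mul_comm α 2]
  have hpow : ∀ h, (walshCrossWeight b d α γ h ^ 2) ^ (-l) =
      ∏ j, walshWeight b α (γ j) (h j) ^ (-(2 * l)) := fun h => by
    rw [ENNReal.prod_rpow_of_ne_zero (fun j _ => walshWeight_ne_zero (by omega) _),
      ← walshCrossWeight_eq_prod, ← ENNReal.rpow_natCast, ← ENNReal.rpow_mul]
    norm_num
  have hcount := ENNReal.encard_setOf_le_le_rpow_mul_tsum (fun h => walshCrossWeight b d α γ h ^ 2)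
    (c := ENNReal.ofReal M) (by simp; linarith) ENNReal.ofReal_ne_top hl₀.le
  rw [tsum_congr hpow, ENNReal.tsum_pi_prod fun j m => walshWeight b α (γ j) m ^ (-(2 * l)),
    prod_congr rfl fun j _ => hcoord j,
    ← ENNReal.ofReal_prod_of_nonneg fun j _ => hfactor j, ENNReal.ofReal_rpow_of_pos (by linarith),
    ← ENNReal.ofReal_mul (by positivity)] at hcount
  exact Set.finite_and_ncard_le_of_encard_le_ofReal
    (mul_nonneg (by positivity) (prod_nonneg fun j _ => hfactor j)) hcount

/-- Cardinality bound for the Walsh hyperbolic cross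
`Ǎ_d(M) = {h ∈ ℕ₀^d : ř(h)² ≤ M}`:
`|Ǎ_d(M)| ≤ M^λ Π_j (1 + γⱼ^{2λ}(b−1)/(b^{2αλ}−b))` for any `λ ∈ (1/(2α), 1]`. -/
theorem walsh_hyperbolic_cross_cardinality_bound (b d : ℕ) (hb : 2 ≤ b)
    (α : ℝ) (hα : 1 / 2 < α)
    (γ : Fin d → ℝ) (hγ0 : ∀ j, 0 ≤ γ j) (hγ1 : ∀ j, γ j ≤ 1)
    (M : ℝ) (hM : 1 ≤ M) (l : ℝ) (hl : 1 / (2 * α) < l) (hl1 : l ≤ 1) :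
    (setOf (fun h : Fin d → ℕ =>
        (walshCrossWeight b d α γ h) ^ 2 ≤ ENNReal.ofReal M)).Finite ∧
    ((setOf (fun h : Fin d → ℕ =>
        (walshCrossWeight b d α γ h) ^ 2 ≤ ENNReal.ofReal M)).ncard : ℝ) ≤
      M ^ l * ∏ j, (1 + γ j ^ (2 * l) *
        (((b : ℝ) - 1) / ((b : ℝ) ^ (2 * α * l) - (b : ℝ)))) :=
  walsh_hyperbolic_cross_cardinality_bound_general b d hb α hα γ hγ0 M hM l hl
end

section
/- Character property of rank-1 polynomial lattice rules: let b be prime, m ∈ ℕ, p ∈ 𝔽_b[x] with deg(p) = m, and q ∈ 𝔽_b[x] with deg(q) < m. For h ∈ {0,…,b^m−1}, identify h with the polynomial h(x) ∈ 𝔽_b[x] via base-b digits, and define x_h = ν_m(h(x)q(x)/p(x)) ∈ [0,1), where ν_m truncates the formal Laurent series Σ_{i≥w} a_i x^{−i} to Σ_{i=1}^m a_i b^{−i}. Then for any k ∈ {0,…,b^m−1}, (1/b^m)Σ_{h=0}^{b^m−1} wal_k(x_h) equals 1 if k(x)·q(x) ≡ 0 (mod p(x)), and 0 otherwise. -/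
open Complex Finset Polynomial
open scoped Classical

/-- The `i`-th base-`b` digit of `h`. -/
def bdigit (b h i : ℕ) : ℕ := (Nat.digits b h).getD i 0

/-- The polynomial over `𝔽_b` associated with the base-`b` digits of `h`:
`h = η₀ + η₁b + ⋯ ↦ η₀ + η₁x + ⋯`. -/
noncomputable def natToPoly (b h : ℕ) : Polynomial (ZMod b) :=
  ∑ i ∈ Finset.range (Nat.digits b h).length,
    Polynomial.C ((bdigit b h i : ZMod b)) * Polynomial.X ^ i

/-- The coefficient `a_i` of `x^{-i}` (for `i ≥ 1`) in the formal Laurent expansion of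
`h(x)q(x)/p(x)` in powers of `x^{-1}`, computed via the power-series identity
`Σ_{i≥1} a_i y^i = y·R*(y)/p*(y)` where `R = h·q mod p` and `R*, p*` are the
reflected polynomials. -/
noncomputable def laurentCoeff (b : ℕ) [Fact (Nat.Prime b)] (m : ℕ)
    (p q : Polynomial (ZMod b)) (h i : ℕ) : ZMod b :=
  PowerSeries.coeff (R := ZMod b) i
    (PowerSeries.X *
      (↑(Polynomial.reflect (m - 1) ((natToPoly b h * q) % p)) : PowerSeries (ZMod b)) *
      ((↑(Polynomial.reflect m p) : PowerSeries (ZMod b)))⁻¹)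

/-! Write `g = k(x) q(x)`. Pairing the digits of `k` with the first `m` Laurent digits of `h q / p`
gives the coefficient of `x⁻¹` in `h g / p` (reversing the polynomials turns the Laurent expansion
into a power series). This residue depends only on `h g mod p` and is additive in `h`, so
`h ↦ wal_k(x_h)` is an additive character of `𝔽_b^m`. It is trivial exactly when `p ∣ g`: otherwise
`h = x ^ (m - 1 - deg (g mod p))` has nonzero residue. Orthogonality of characters concludes. -/

section Residue

variable {F : Type*} [Field F]

lemma natDegree_div_le_sub (f p : F[X]) : (f / p).natDegree ≤ f.natDegree - p.natDegree := by
  rcases eq_or_ne p 0 with rfl | hp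
  · simp
  rw [Polynomial.div_def]
  refine natDegree_C_mul_le _ _ |>.trans ?_
  rw [natDegree_divByMonic _ (monic_mul_leadingCoeff_inv hp), natDegree_mul_leadingCoeff_inv _ hp]

/-- The coefficient of `x⁻¹` in the expansion of `f / p` in powers of `x⁻¹`: only the proper
fraction `(f % p) / p` contributes, and its `x⁻¹`-coefficient is `(f % p)_{deg p - 1} / lc p`. -/
noncomputable def residueDiv (p : F[X]) : F[X] →+ F where
  toFun f := p.leadingCoeff⁻¹ * (f % p).coeff (p.natDegree - 1)
  map_zero' := by simp
  map_add' f g := by rw [add_mod, coeff_add, mul_add]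

lemma residueDiv_apply (p f : F[X]) :
    residueDiv p f = p.leadingCoeff⁻¹ * (f % p).coeff (p.natDegree - 1) := rfl

lemma residueDiv_eq_zero_of_dvd {p f : F[X]} (h : p ∣ f) : residueDiv p f = 0 := by
  rw [residueDiv_apply, EuclideanDomain.mod_eq_zero.mpr h, coeff_zero, mul_zero]

lemma residueDiv_mul_mod (p f g : F[X]) : residueDiv p (f * (g % p)) = residueDiv p (f * g) := by
  have hg : f * g = f * (g % p) + p * (f * (g / p)) := by
    conv_lhs => rw [← EuclideanDomain.mod_add_div g p]
    ring
  rw [hg, map_add, residueDiv_eq_zero_of_dvd (dvd_mul_right _ _), add_zero]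

lemma forall_residueDiv_mul_eq_zero_iff {p g : F[X]} {m : ℕ} (hp : p.degree = m) :
    (∀ f ∈ degreeLT F m, residueDiv p (f * g) = 0) ↔ p ∣ g := by
  refine ⟨fun h => ?_, fun h f _ => residueDiv_eq_zero_of_dvd (dvd_mul_of_dvd_right h f)⟩
  have hp0 : p ≠ 0 := by rintro rfl; simp at hp
  have hpm : p.natDegree = m := natDegree_eq_of_degree_eq_some hp
  by_contra hdvd
  set W := g % p
  have hW : W ≠ 0 := mt EuclideanDomain.mod_eq_zero.mp hdvd
  have hWp : W.natDegree < m := hpm ▸ natDegree_lt_natDegree hW (degree_mod_lt g hp0)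
  -- `x ^ j * g` with `j = deg p - 1 - deg (g % p)` has nonzero residue
  set j := m - 1 - W.natDegree
  have hXW : X ^ j * W % p = X ^ j * W := by
    rw [mod_eq_self_iff hp0, hp, degree_mul, degree_X_pow, degree_eq_natDegree hW]
    exact_mod_cast (by omega : j + W.natDegree < m)
  have hres : residueDiv p (X ^ j * g) = p.leadingCoeff⁻¹ * W.leadingCoeff := by
    rw [← residueDiv_mul_mod, residueDiv_apply, hXW, hpm, coeff_X_pow_mul', if_pos (by omega),
      show m - 1 - j = W.natDegree by omega]
    rfl
  refine (mul_ne_zero (inv_ne_zero (leadingCoeff_ne_zero.mpr hp0))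
    (leadingCoeff_ne_zero.mpr hW)) (hres ▸ h _ ?_)
  exact mem_degreeLT.mpr (by rw [degree_X_pow]; exact_mod_cast (by omega : j < m))

end Residue

section LaurentExpansion

variable {F : Type*} [Field F]

lemma coeff_reflect_mul {R : Type*} [CommSemiring R] (f : R[X]) (S : PowerSeries R) (n : ℕ) :
    PowerSeries.coeff n ((reflect n f : PowerSeries R) * S)
      = ∑ i ∈ range (n + 1), f.coeff i * PowerSeries.coeff i S := by
  rw [PowerSeries.coeff_mul, Nat.sum_antidiagonal_eq_sum_range_succ
    (fun i j => PowerSeries.coeff i (reflect n f : PowerSeries R) * PowerSeries.coeff j S),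
    ← sum_range_reflect]
  refine sum_congr rfl fun i hi => ?_
  have hi : i ≤ n := Nat.lt_succ_iff.mp (mem_range.mp hi)
  rw [coeff_coe, coeff_reflect, revAt_le (by omega), show n - (n.succ - 1 - i) = i by omega]

lemma reflect_add_eq_reflect_mul_X_pow {R : Type*} [Semiring R] {f : R[X]} {n : ℕ}
    (hf : f.natDegree ≤ n) (k : ℕ) : reflect (n + k) f = reflect n f * X ^ k := by
  rw [← reflect_one k, ← reflect_mul f 1 hf (by simp), mul_one]

lemma natDegree_mul_div_le {p f g : F[X]} {n : ℕ} (hp : p.natDegree = n + 1)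
    (hf : f.natDegree ≤ n) (hg : g.natDegree ≤ n) : (f * g / p).natDegree ≤ n := by
  have hfg : (f * g).natDegree ≤ n + n := natDegree_mul_le.trans (add_le_add hf hg)
  exact (natDegree_div_le_sub _ _).trans (by omega)

/-- Reversing `f * g = (f * g % p) + (f * g / p) * p` at degree `2n + 1`. -/
lemma reflect_mul_reflect_mul_X {p f g : F[X]} {n : ℕ} (hp : p.natDegree = n + 1)
    (hf : f.natDegree ≤ n) (hg : g.natDegree ≤ n) :
    reflect n f * reflect n g * X
      = reflect n (f * g % p) * X ^ (n + 1) + reflect n (f * g / p) * reflect (n + 1) p := by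
  have hmod : (f * g % p).natDegree ≤ n := by
    have := natDegree_mod_lt (f * g) (q := p) (by omega)
    omega
  calc reflect n f * reflect n g * X
      = reflect (n + n + 1) (f * g) := by
        rw [← reflect_mul f g hf hg, reflect_add_eq_reflect_mul_X_pow
          (natDegree_mul_le.trans (add_le_add hf hg)), pow_one]
    _ = reflect (n + (n + 1)) (f * g % p + f * g / p * p) := by
        rw [EuclideanDomain.mod_add_div', add_assoc]
    _ = _ := by
        rw [reflect_add, reflect_mul _ _ (natDegree_mul_div_le hp hf hg) hp.le,
          reflect_add_eq_reflect_mul_X_pow hmod]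

/-- In `y = x⁻¹`, the power series `reflect n g / reflect (n + 1) p` is `y⁻¹ (g / p)`, so the left
side pairs the coefficients of `f` with the Laurent coefficients of `g / p`. -/
lemma sum_coeff_mul_coeff_reflect_mul_inv {p f g : F[X]} {n : ℕ} (hp : p.natDegree = n + 1)
    (hf : f.natDegree ≤ n) (hg : g.natDegree ≤ n) :
    ∑ i ∈ range (n + 1), f.coeff i *
        PowerSeries.coeff i ((reflect n g : PowerSeries F) * (reflect (n + 1) p : PowerSeries F)⁻¹)
      = residueDiv p (f * g) := by
  set P : PowerSeries F := (reflect (n + 1) p : PowerSeries F)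
  have hP : PowerSeries.constantCoeff P = p.leadingCoeff := by
    rw [← PowerSeries.coeff_zero_eq_constantCoeff_apply, coeff_coe, coeff_reflect, revAt_zero,
      leadingCoeff, hp]
  have hPinv : P * P⁻¹ = 1 :=
    PowerSeries.mul_inv_cancel P (hP ▸ leadingCoeff_ne_zero.mpr (by rintro rfl; simp at hp))
  have hid := congrArg (fun s : F[X] => (s : PowerSeries F)) (reflect_mul_reflect_mul_X hp hf hg)
  simp only [Polynomial.coe_mul, Polynomial.coe_add, Polynomial.coe_pow, coe_X] at hid
  have hser :
      PowerSeries.X * ((reflect n f : PowerSeries F) * ((reflect n g : PowerSeries F) * P⁻¹))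
      = PowerSeries.X ^ (n + 1) * ((reflect n (f * g % p) : PowerSeries F) * P⁻¹)
        + (reflect n (f * g / p) : PowerSeries F) := by
    linear_combination P⁻¹ * hid + (reflect n (f * g / p) : PowerSeries F) * hPinv
  have hdiv : (f * g / p).coeff (n + 1) = 0 :=
    coeff_eq_zero_of_natDegree_lt ((natDegree_mul_div_le hp hf hg).trans_lt (by omega))
  have := congrArg (PowerSeries.coeff (n + 1)) hser
  rw [PowerSeries.coeff_succ_X_mul, coeff_reflect_mul, map_add, PowerSeries.coeff_X_pow_mul',
    if_pos le_rfl, Nat.sub_self, PowerSeries.coeff_zero_eq_constantCoeff_apply, map_mul,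
    PowerSeries.constantCoeff_inv, hP, ← PowerSeries.coeff_zero_eq_constantCoeff_apply,
    coeff_coe, coeff_coe, coeff_reflect, coeff_reflect, revAt_zero, revAt_eq_self_of_lt (by omega),
    hdiv, add_zero] at this
  rw [this, residueDiv_apply, hp, Nat.add_sub_cancel, mul_comm]

end LaurentExpansion

section Digits

lemma coeff_natToPoly (b h i : ℕ) : (natToPoly b h).coeff i = bdigit b h i := by
  rw [natToPoly, finsetSum_coeff]
  simp only [coeff_C_mul_X_pow, sum_ite_eq, mem_range]
  split_ifs with hi
  · rfl
  · rw [bdigit, List.getD_eq_default _ _ (not_lt.mp hi), Nat.cast_zero]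

lemma bdigit_eq_div_pow_mod {b : ℕ} (hb : 2 ≤ b) (h i : ℕ) : bdigit b h i = h / b ^ i % b :=
  Nat.getD_digits h i hb

lemma coeff_natToPoly_eq_zero {b h m i : ℕ} (hb : 2 ≤ b) (hh : h < b ^ m) (hi : m ≤ i) :
    (natToPoly b h).coeff i = 0 := by
  rw [coeff_natToPoly, bdigit_eq_div_pow_mod hb, Nat.div_eq_of_lt (hh.trans_le (Nat.pow_le_pow_right
    (by omega) hi)), Nat.zero_mod, Nat.cast_zero]

lemma natDegree_natToPoly_le {b h m : ℕ} (hb : 2 ≤ b) (hh : h < b ^ (m + 1)) :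
    (natToPoly b h).natDegree ≤ m :=
  natDegree_le_iff_coeff_eq_zero.mpr fun _ hi =>
    coeff_natToPoly_eq_zero hb hh (by exact_mod_cast hi)

lemma natToPoly_finFunctionFinEquiv {b m : ℕ} (hb : 2 ≤ b) (f : Fin m → Fin b) :
    natToPoly b (finFunctionFinEquiv f)
      = ((degreeLTEquiv (ZMod b) m).symm fun i => ((f i : ℕ) : ZMod b) : (ZMod b)[X]) := by
  ext j
  by_cases hj : j < m
  · rw [coeff_natToPoly, bdigit_eq_div_pow_mod hb, ← finFunctionFinEquiv_symm_apply_val _ ⟨j, hj⟩,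
      Equiv.symm_apply_apply]
    exact (congrFun ((degreeLTEquiv (ZMod b) m).apply_symm_apply
      fun i => ((f i : ℕ) : ZMod b)) ⟨j, hj⟩).symm
  · rw [coeff_natToPoly_eq_zero hb (finFunctionFinEquiv f).isLt (not_lt.mp hj)]
    refine (coeff_eq_zero_of_degree_lt ?_).symm
    exact (mem_degreeLT.mp (Subtype.prop _)).trans_le (by exact_mod_cast not_lt.mp hj)

lemma ZMod.finEquiv_apply {n : ℕ} [NeZero n] (x : Fin n) :
    ZMod.finEquiv n x = ((x : ℕ) : ZMod n) := by
  obtain ⟨n, rfl⟩ := Nat.exists_eq_succ_of_ne_zero (NeZero.ne n)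
  exact (Fin.cast_val_eq_self x).symm

lemma sum_range_natToPoly {M : Type*} [AddCommMonoid M] {b : ℕ} [NeZero b] (hb : 2 ≤ b) (m : ℕ)
    (G : (ZMod b)[X] → M) :
    ∑ h ∈ range (b ^ m), G (natToPoly b h)
      = ∑ v : Fin m → ZMod b, G ((degreeLTEquiv (ZMod b) m).symm v) := by
  calc ∑ h ∈ range (b ^ m), G (natToPoly b h)
      = ∑ f : Fin m → Fin b, G (natToPoly b (finFunctionFinEquiv f)) :=
        (Fin.sum_univ_eq_sum_range (fun h => G (natToPoly b h)) _).symm.trans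
          (finFunctionFinEquiv.sum_comp (fun a : Fin (b ^ m) => G (natToPoly b a))).symm
    _ = ∑ f : Fin m → Fin b,
          G ((degreeLTEquiv (ZMod b) m).symm fun i => ZMod.finEquiv b (f i)) := by
        simp_rw [natToPoly_finFunctionFinEquiv hb, ZMod.finEquiv_apply]
    _ = _ := (Equiv.piCongrRight fun _ => (ZMod.finEquiv b).toEquiv).sum_comp
          (fun v => G ((degreeLTEquiv (ZMod b) m).symm v))

end Digits

section Characters

lemma cexp_sum_mul_val_eq_stdAddChar {ι : Type*} {N : ℕ} [NeZero N] (s : Finset ι) (c : ι → ℕ)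
    (a : ι → ZMod N) :
    Complex.exp (2 * Real.pi * Complex.I / N * ∑ i ∈ s, (c i : ℂ) * ((a i).val : ℂ))
      = ZMod.stdAddChar (∑ i ∈ s, (c i : ZMod N) * a i) := by
  have hsum : ∑ i ∈ s, (c i : ZMod N) * a i = ((∑ i ∈ s, c i * (a i).val : ℕ) : ZMod N) := by
    push_cast
    simp_rw [ZMod.natCast_val, ZMod.cast_id', id]
  rw [hsum, ZMod.stdAddChar_apply, ZMod.toCircle_natCast]
  push_cast
  ring_nf

lemma sum_stdAddChar_comp_eq_ite {A : Type*} [AddGroup A] [Fintype A] {N : ℕ} [NeZero N]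
    (T : A →+ ZMod N) :
    ∑ a, ZMod.stdAddChar (T a) = if T = 0 then (Fintype.card A : ℂ) else 0 := by
  have hT : ZMod.stdAddChar.compAddMonoidHom T = 0 ↔ T = 0 := by
    simp only [DFunLike.ext_iff, AddChar.compAddMonoidHom_apply, AddChar.zero_apply,
      AddMonoidHom.zero_apply, ZMod.injective_stdAddChar.eq_iff' (AddChar.map_zero_eq_one _)]
  simp_rw [← AddChar.compAddMonoidHom_apply, AddChar.sum_eq_ite, hT]

end Characters

lemma sum_bdigit_mul_laurentCoeff {b m : ℕ} [Fact b.Prime] {p : (ZMod b)[X]} (hp : p.degree = m)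
    (q : (ZMod b)[X]) {k : ℕ} (hk : k < b ^ m) (h : ℕ) :
    ∑ i ∈ range m, (bdigit b k i : ZMod b) * laurentCoeff b m p q h (i + 1)
      = residueDiv p (natToPoly b h * (natToPoly b k * q)) := by
  have hpm : p.natDegree = m := natDegree_eq_of_degree_eq_some hp
  rcases m with _ | n
  · rw [range_zero, sum_empty, residueDiv_eq_zero_of_dvd
      (isUnit_iff_degree_eq_zero.mpr (by exact_mod_cast hp)).dvd]
  have hR : (natToPoly b h * q % p).natDegree ≤ n := by
    have := natDegree_mod_lt (natToPoly b h * q) (q := p) (by omega)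
    omega
  simp only [laurentCoeff, mul_assoc, PowerSeries.coeff_succ_X_mul, Nat.add_sub_cancel,
    ← coeff_natToPoly]
  rw [sum_coeff_mul_coeff_reflect_mul_inv hpm
    (natDegree_natToPoly_le (Fact.out : b.Prime).two_le hk) hR, residueDiv_mul_mod, mul_left_comm]

theorem polynomial_lattice_character_property_general
    (b : ℕ) [hb : Fact (Nat.Prime b)] (m : ℕ)
    (p q : Polynomial (ZMod b)) (hp : p.degree = (m : ℕ))
    (k : ℕ) (hk : k < b ^ m) :
    (1 / ((b : ℂ) ^ m)) * ∑ h ∈ Finset.range (b ^ m),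
        Complex.exp ((2 * Real.pi * Complex.I / b) *
          ∑ i ∈ Finset.range m,
            (bdigit b k i : ℂ) * ((laurentCoeff b m p q h (i + 1)).val : ℂ)) =
      if p ∣ natToPoly b k * q then 1 else 0 := by
  set g := natToPoly b k * q
  set E := degreeLTEquiv (ZMod b) m
  let T : (Fin m → ZMod b) →+ ZMod b := (residueDiv p).comp <| (AddMonoidHom.mulRight g).comp
    ((degreeLT (ZMod b) m).subtype ∘ₗ E.symm.toLinearMap).toAddMonoidHom
  have hT : T = 0 ↔ p ∣ g := by
    rw [← forall_residueDiv_mul_eq_zero_iff hp, DFunLike.ext_iff, E.surjective.forall,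
      Subtype.forall]
    simp [T]
  calc _ = 1 / (b : ℂ) ^ m *
        ∑ h ∈ range (b ^ m), ZMod.stdAddChar (residueDiv p (natToPoly b h * g)) := by
        simp_rw [cexp_sum_mul_val_eq_stdAddChar, sum_bdigit_mul_laurentCoeff hp q hk]
        rfl
    _ = 1 / (b : ℂ) ^ m * ∑ v, ZMod.stdAddChar (T v) := by
        rw [sum_range_natToPoly hb.out.two_le m fun f => ZMod.stdAddChar (residueDiv p (f * g))]
        rfl
    _ = _ := by
        simp only [sum_stdAddChar_comp_eq_ite, hT, Fintype.card_fun, ZMod.card, Fintype.card_fin,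
          Nat.cast_pow]
        split_ifs
        · exact one_div_mul_cancel (pow_ne_zero _ (Nat.cast_ne_zero.mpr hb.out.ne_zero))
        · exact mul_zero _

/-- Character property of rank-1 polynomial lattice rules: averaging the Walsh
function `wal_k` over the `b^m` polynomial lattice points
`x_h = ν_m(h(x)q(x)/p(x))` gives `1` if `k(x)q(x) ≡ 0 (mod p(x))` and `0` otherwise. -/
theorem polynomial_lattice_character_property
    (b : ℕ) [hb : Fact (Nat.Prime b)] (m : ℕ) (hm : 1 ≤ m)
    (p q : Polynomial (ZMod b)) (hp : p.degree = (m : ℕ)) (hq : q.degree < (m : ℕ))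
    (k : ℕ) (hk : k < b ^ m) :
    (1 / ((b : ℂ) ^ m)) * ∑ h ∈ Finset.range (b ^ m),
        Complex.exp ((2 * Real.pi * Complex.I / b) *
          ∑ i ∈ Finset.range m,
            (bdigit b k i : ℂ) * ((laurentCoeff b m p q h (i + 1)).val : ℂ)) =
      if p ∣ natToPoly b k * q then 1 else 0 :=
  polynomial_lattice_character_property_general b (hb := hb) m p q hp k hk
end
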